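/- Fix positive integers n, d, L and reals ρ ≥ 0, β ≥ 0. There exists a constant C ≥ 0, depending only on ρ, β, n, d, L, such that the following holds. Let σ : ℝ → ℝ be ρ-Lipschitz with σ(0) = 0; let σ' : ℝ → ℝ satisfy |σ'(x)| ≤ β for all x and be ρ-Lipschitz; let Φ map n×d matrices to n×d matrices with ‖Φ(Z₁) − Φ(Z₂)‖ ≤ ρ·‖Z₁ − Z₂‖ and ‖Φ(Z)‖ ≤ β for all Z, Z₁, Z₂. Let A, A_SG be n×n matrices with ‖A‖ ≤ β, ‖A_SG‖ ≤ β, let X be an n×d matrix with ‖X‖ ≤ β, and let W^(0), …, W^(L−1) be d×d matrices with ‖W^(l)‖ ≤ β. Run the GCN forward recursion with σ to get H^(l), Z^(l) (resp. H_SG^(l), Z_SG^(l) using A_SG), and the backward recursion with σ' and terminal gradients G^(L) = Φ(Z^(L)), G_SG^(L) = Φ(Z_SG^(L)), obtaining G^(l), G_SG^(l). Then the weight gradients satisfy ‖(A_SG·H_SG^(l))ᵀ·G_SG^(l+1) − (A·H^(l))ᵀ·G^(l+1)‖ ≤ C·‖A_SG − A‖ for all 0 ≤ l ≤ L−1. 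-/

import Mathlib

/-!
Write `δ = ‖A_SG - A‖`. Every matrix of the forward and backward passes is built from
boundedly many bounded factors, so by induction over the layers it is bounded by a constant
depending only on `n, d, ρ, β` and the layer, and the SG and exact versions differ by at most
such a constant times `δ`: a difference of products splits as
`A'B' - AB = (A' - A)B' + A(B' - B)`, the maps `σ, σ', Φ` are `ρ`-Lipschitz, and for the
entrywise sup norm `‖AB‖ ≤ k‖A‖‖B‖` with `k` the inner dimension. The forward pass is
treated from the input up, the backward pass from the output down, and the weight gradient
combines the two.
-/

open Matrix

attribute [local instance] Matrix.normedAddCommGroup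

/-- The activations of the GCN forward recursion: `gcnH A X W σ 0 = X` and
`gcnH A X W σ (l+1) = σ(A * gcnH A X W σ l * W l)` entrywise. -/
noncomputable def gcnH {n d : ℕ} (A : Matrix (Fin n) (Fin n) ℝ)
    (X : Matrix (Fin n) (Fin d) ℝ) (W : ℕ → Matrix (Fin d) (Fin d) ℝ)
    (σ : ℝ → ℝ) : ℕ → Matrix (Fin n) (Fin d) ℝ
  | 0 => X
  | l + 1 => (A * gcnH A X W σ l * W l).map σ

/-- The pre-activations of the GCN forward recursion:
`gcnZ A X W σ (l+1) = A * gcnH A X W σ l * W l` (the value at index 0 is junk). -/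
noncomputable def gcnZ {n d : ℕ} (A : Matrix (Fin n) (Fin n) ℝ)
    (X : Matrix (Fin n) (Fin d) ℝ) (W : ℕ → Matrix (Fin d) (Fin d) ℝ)
    (σ : ℝ → ℝ) : ℕ → Matrix (Fin n) (Fin d) ℝ
  | 0 => 0
  | l + 1 => A * gcnH A X W σ l * W l

open NNReal

namespace Matrix

variable {l m n α : Type*} [Fintype l] [Fintype m] [Fintype n]

section NormedRing

variable [NonUnitalNormedRing α]

theorem norm_mul_le_card_mul_mul (A : Matrix l m α) (B : Matrix m n α) :
    ‖A * B‖ ≤ Fintype.card m * ‖A‖ * ‖B‖ := by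
  refine (norm_le_iff (by positivity)).2 fun i j => ?_
  calc ‖∑ k, A i k * B k j‖ ≤ ∑ k, ‖A i k‖ * ‖B k j‖ :=
        norm_sum_le_of_le _ fun k _ => norm_mul_le _ _
    _ ≤ ∑ _k : m, ‖A‖ * ‖B‖ := by
        gcongr <;> exact norm_entry_le_entrywise_sup_norm _
    _ = Fintype.card m * ‖A‖ * ‖B‖ := by simp [mul_assoc]

theorem norm_mul_le_of_le {A : Matrix l m α} {B : Matrix m n α} {a b : ℝ}
    (hA : ‖A‖ ≤ a) (hB : ‖B‖ ≤ b) : ‖A * B‖ ≤ Fintype.card m * a * b := by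
  have ha : 0 ≤ a := (norm_nonneg _).trans hA
  calc ‖A * B‖ ≤ Fintype.card m * ‖A‖ * ‖B‖ := norm_mul_le_card_mul_mul A B
    _ ≤ Fintype.card m * a * b := by gcongr

theorem norm_mul_sub_mul_le {A A' : Matrix l m α} {B B' : Matrix m n α} {a b x y : ℝ}
    (hA : ‖A‖ ≤ a) (hB' : ‖B'‖ ≤ b) (hA'A : ‖A' - A‖ ≤ x) (hB'B : ‖B' - B‖ ≤ y) :
    ‖A' * B' - A * B‖ ≤ Fintype.card m * (x * b + a * y) := by
  have hsplit : A' * B' - A * B = (A' - A) * B' + A * (B' - B) := by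
    rw [Matrix.sub_mul, Matrix.mul_sub]; abel
  rw [hsplit, mul_add, ← mul_assoc, ← mul_assoc]
  exact (norm_add_le _ _).trans
    (add_le_add (norm_mul_le_of_le hA'A hB') (norm_mul_le_of_le hA hB'B))

theorem norm_hadamard_le_of_le {A B : Matrix m n α} {a b : ℝ} (hA : ‖A‖ ≤ a) (hB : ‖B‖ ≤ b) :
    ‖A ⊙ B‖ ≤ a * b := by
  have ha : 0 ≤ a := (norm_nonneg _).trans hA
  have hb : 0 ≤ b := (norm_nonneg _).trans hB
  refine (norm_le_iff (mul_nonneg ha hb)).2 fun i j => (norm_mul_le _ _).trans ?_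
  gcongr
  · exact (norm_entry_le_entrywise_sup_norm A).trans hA
  · exact (norm_entry_le_entrywise_sup_norm B).trans hB

theorem norm_hadamard_sub_hadamard_le {A A' B B' : Matrix m n α} {a b x y : ℝ}
    (hA : ‖A‖ ≤ a) (hB' : ‖B'‖ ≤ b) (hA'A : ‖A' - A‖ ≤ x) (hB'B : ‖B' - B‖ ≤ y) :
    ‖A' ⊙ B' - A ⊙ B‖ ≤ x * b + a * y := by
  have hsplit : A' ⊙ B' - A ⊙ B = (A' - A) ⊙ B' + A ⊙ (B' - B) := by
    ext i j
    simp only [sub_apply, add_apply, hadamard_apply]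
    noncomm_ring
  rw [hsplit]
  exact (norm_add_le _ _).trans
    (add_le_add (norm_hadamard_le_of_le hA'A hB') (norm_hadamard_le_of_le hA hB'B))

end NormedRing

theorem norm_map_sub_map_le {σ : ℝ → ℝ} {ρ : ℝ≥0} (hσ : ∀ x y, |σ x - σ y| ≤ ρ * |x - y|)
    (A B : Matrix m n ℝ) : ‖A.map σ - B.map σ‖ ≤ ρ * ‖A - B‖ := by
  refine (norm_le_iff (by positivity)).2 fun i j => ?_
  have := norm_entry_le_entrywise_sup_norm (A - B) (i := i) (j := j)
  simp only [sub_apply, map_apply, Real.norm_eq_abs] at this ⊢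
  exact (hσ _ _).trans (by gcongr)

theorem norm_map_le_of_abs_le {f : ℝ → ℝ} {β : ℝ≥0} (hf : ∀ x, |f x| ≤ β)
    (A : Matrix m n ℝ) : ‖A.map f‖ ≤ β :=
  (norm_le_iff β.2).2 fun i j => hf (A i j)

theorem norm_map_le {σ : ℝ → ℝ} {ρ : ℝ≥0} (hσ : ∀ x y, |σ x - σ y| ≤ ρ * |x - y|)
    (hσ0 : σ 0 = 0) (A : Matrix m n ℝ) : ‖A.map σ‖ ≤ ρ * ‖A‖ := by
  simpa [Matrix.map_zero σ hσ0] using norm_map_sub_map_le hσ A 0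

end Matrix

section GCN

variable {n d L : ℕ} {ρ β : ℝ≥0} {σ : ℝ → ℝ} {A A' : Matrix (Fin n) (Fin n) ℝ}
  {X : Matrix (Fin n) (Fin d) ℝ} {W : ℕ → Matrix (Fin d) (Fin d) ℝ}

def gcnActBound (n d : ℕ) (ρ β : ℝ≥0) : ℕ → ℝ≥0
  | 0 => β
  | l + 1 => ρ * (d * (n * β * gcnActBound n d ρ β l) * β)

def gcnPreactLip (n d : ℕ) (ρ β : ℝ≥0) : ℕ → ℝ≥0
  | 0 => 0
  | l + 1 => d * (n * (gcnActBound n d ρ β l + β * (ρ * gcnPreactLip n d ρ β l))) * β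

theorem norm_gcnH_le (hσ : ∀ x y, |σ x - σ y| ≤ ρ * |x - y|) (hσ0 : σ 0 = 0)
    (hA : ‖A‖ ≤ β) (hX : ‖X‖ ≤ β) (hW : ∀ l, l < L → ‖W l‖ ≤ β) :
    ∀ l ≤ L, ‖gcnH A X W σ l‖ ≤ gcnActBound n d ρ β l
  | 0, _ => hX
  | l + 1, hl => by
    have hH := norm_gcnH_le hσ hσ0 hA hX hW l (by omega)
    have hZ := norm_mul_le_of_le (norm_mul_le_of_le hA hH) (hW l (by omega))
    simp only [Fintype.card_fin] at hZ
    calc ‖gcnH A X W σ (l + 1)‖ ≤ ρ * ‖A * gcnH A X W σ l * W l‖ := norm_map_le hσ hσ0 _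
      _ ≤ gcnActBound n d ρ β (l + 1) := by
        simp only [gcnActBound, NNReal.coe_mul, NNReal.coe_natCast]
        gcongr

theorem norm_gcnZ_succ_sub_le {l : ℕ} (hA : ‖A‖ ≤ β) (hW : ‖W l‖ ≤ β)
    (hH' : ‖gcnH A' X W σ l‖ ≤ gcnActBound n d ρ β l)
    (hH : ‖gcnH A' X W σ l - gcnH A X W σ l‖ ≤ ρ * gcnPreactLip n d ρ β l * ‖A' - A‖) :
    ‖gcnZ A' X W σ (l + 1) - gcnZ A X W σ (l + 1)‖ ≤
      gcnPreactLip n d ρ β (l + 1) * ‖A' - A‖ := by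
  have h := norm_mul_le_of_le (norm_mul_sub_mul_le hA hH' (le_refl ‖A' - A‖) hH) hW
  simp only [Fintype.card_fin] at h
  rw [gcnZ, gcnZ, ← Matrix.sub_mul]
  refine h.trans_eq ?_
  simp only [gcnPreactLip, NNReal.coe_mul, NNReal.coe_add, NNReal.coe_natCast]
  ring

theorem norm_gcnH_sub_le (hσ : ∀ x y, |σ x - σ y| ≤ ρ * |x - y|) (hσ0 : σ 0 = 0)
    (hA : ‖A‖ ≤ β) (hA' : ‖A'‖ ≤ β) (hX : ‖X‖ ≤ β) (hW : ∀ l, l < L → ‖W l‖ ≤ β) :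
    ∀ l ≤ L, ‖gcnH A' X W σ l - gcnH A X W σ l‖ ≤ ρ * gcnPreactLip n d ρ β l * ‖A' - A‖
  | 0, _ => by simp [gcnH, gcnPreactLip]
  | l + 1, hl => by
    have hZ := norm_gcnZ_succ_sub_le hA (hW l (by omega))
      (norm_gcnH_le hσ hσ0 hA' hX hW l (by omega))
      (norm_gcnH_sub_le hσ hσ0 hA hA' hX hW l (by omega))
    calc ‖gcnH A' X W σ (l + 1) - gcnH A X W σ (l + 1)‖
        ≤ ρ * ‖gcnZ A' X W σ (l + 1) - gcnZ A X W σ (l + 1)‖ := norm_map_sub_map_le hσ _ _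
      _ ≤ ρ * gcnPreactLip n d ρ β (l + 1) * ‖A' - A‖ := by
        rw [mul_assoc]
        gcongr

theorem norm_gcnZ_sub_le (hσ : ∀ x y, |σ x - σ y| ≤ ρ * |x - y|) (hσ0 : σ 0 = 0)
    (hA : ‖A‖ ≤ β) (hA' : ‖A'‖ ≤ β) (hX : ‖X‖ ≤ β) (hW : ∀ l, l < L → ‖W l‖ ≤ β) :
    ∀ l ≤ L, ‖gcnZ A' X W σ l - gcnZ A X W σ l‖ ≤ gcnPreactLip n d ρ β l * ‖A' - A‖
  | 0, _ => by simp [gcnZ, gcnPreactLip]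
  | l + 1, hl => norm_gcnZ_succ_sub_le hA (hW l (by omega))
      (norm_gcnH_le hσ hσ0 hA' hX hW l (by omega))
      (norm_gcnH_sub_le hσ hσ0 hA hA' hX hW l (by omega))

/-- Indexed by the distance `L - l` from the output layer, as is `gcnGradLip`. -/
def gcnGradBound (n d : ℕ) (β : ℝ≥0) : ℕ → ℝ≥0
  | 0 => β
  | k + 1 => β * (d * (n * β * gcnGradBound n d β k) * β)

def gcnGradLip (n d : ℕ) (ρ β : ℝ≥0) (L : ℕ) : ℕ → ℝ≥0
  | 0 => ρ * gcnPreactLip n d ρ β L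
  | k + 1 => ρ * gcnPreactLip n d ρ β (L - (k + 1)) * (d * (n * β * gcnGradBound n d β k) * β)
      + β * (d * (n * (gcnGradBound n d β k + β * gcnGradLip n d ρ β L k)) * β)

theorem norm_gcnGrad_le {σ' : ℝ → ℝ} (hσ' : ∀ x, |σ' x| ≤ β) (hA : ‖A‖ ≤ β)
    (hW : ∀ l, l < L → ‖W l‖ ≤ β) {Z G : ℕ → Matrix (Fin n) (Fin d) ℝ} (hGL : ‖G L‖ ≤ β)
    (hG : ∀ l, 1 ≤ l → l < L → G l = ((Z l).map σ') ⊙ (Aᵀ * G (l + 1) * (W l)ᵀ))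
    {l : ℕ} (hl : 1 ≤ l) (hlL : l ≤ L) : ‖G l‖ ≤ gcnGradBound n d β (L - l) := by
  refine Nat.decreasingInduction' (P := fun l => ‖G l‖ ≤ gcnGradBound n d β (L - l))
    (fun k hkL hlk ih => ?_) hlL (by simpa [gcnGradBound] using hGL)
  have hY := norm_mul_le_of_le (norm_mul_le_of_le ((norm_transpose A).trans_le hA) ih)
    ((norm_transpose (W k)).trans_le (hW k hkL))
  simp only [Fintype.card_fin] at hY
  rw [hG k (by omega) hkL, show L - k = L - (k + 1) + 1 by omega]
  refine (norm_hadamard_le_of_le (norm_map_le_of_abs_le hσ' _) hY).trans_eq ?_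
  simp only [gcnGradBound, NNReal.coe_mul, NNReal.coe_natCast]

theorem norm_gcnGrad_sub_le {σ' : ℝ → ℝ} (hσ'b : ∀ x, |σ' x| ≤ β)
    (hσ'l : ∀ x y, |σ' x - σ' y| ≤ ρ * |x - y|)
    {Φ : Matrix (Fin n) (Fin d) ℝ → Matrix (Fin n) (Fin d) ℝ}
    (hΦl : ∀ Z₁ Z₂, ‖Φ Z₁ - Φ Z₂‖ ≤ ρ * ‖Z₁ - Z₂‖) (hΦb : ∀ Z, ‖Φ Z‖ ≤ β)
    (hA : ‖A‖ ≤ β) (hA' : ‖A'‖ ≤ β) (hW : ∀ l, l < L → ‖W l‖ ≤ β)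
    {Z Z' G G' : ℕ → Matrix (Fin n) (Fin d) ℝ}
    (hZ : ∀ l ≤ L, ‖Z' l - Z l‖ ≤ gcnPreactLip n d ρ β l * ‖A' - A‖)
    (hGL : G L = Φ (Z L)) (hG'L : G' L = Φ (Z' L))
    (hG : ∀ l, 1 ≤ l → l < L → G l = ((Z l).map σ') ⊙ (Aᵀ * G (l + 1) * (W l)ᵀ))
    (hG' : ∀ l, 1 ≤ l → l < L → G' l = ((Z' l).map σ') ⊙ (A'ᵀ * G' (l + 1) * (W l)ᵀ))
    {l : ℕ} (hl : 1 ≤ l) (hlL : l ≤ L) :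
    ‖G' l - G l‖ ≤ gcnGradLip n d ρ β L (L - l) * ‖A' - A‖ := by
  refine Nat.decreasingInduction'
    (P := fun l => ‖G' l - G l‖ ≤ gcnGradLip n d ρ β L (L - l) * ‖A' - A‖)
    (fun k hkL hlk ih => ?_) hlL ?_
  · have hS : ‖(Z' k).map σ' - (Z k).map σ'‖ ≤ ρ * (gcnPreactLip n d ρ β k * ‖A' - A‖) :=
      (norm_map_sub_map_le hσ'l _ _).trans (by gcongr; exact hZ k hkL.le)
    have hG'k := norm_gcnGrad_le hσ'b hA' hW (hG'L ▸ hΦb _) hG' (l := k + 1) (by omega) hkL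
    have hAT : ‖Aᵀ‖ ≤ β := (norm_transpose A).trans_le hA
    have hWT : ‖(W k)ᵀ‖ ≤ β := (norm_transpose (W k)).trans_le (hW k hkL)
    have hY' := norm_mul_le_of_le (norm_mul_le_of_le ((norm_transpose A').trans_le hA') hG'k) hWT
    have hATd : ‖A'ᵀ - Aᵀ‖ ≤ ‖A' - A‖ := by rw [← transpose_sub, norm_transpose]
    have hY := norm_mul_le_of_le (norm_mul_sub_mul_le hAT hG'k hATd ih) hWT
    simp only [Fintype.card_fin, Matrix.sub_mul] at hY hY'
    rw [hG k (by omega) hkL, hG' k (by omega) hkL, show L - k = L - (k + 1) + 1 by omega]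
    refine (norm_hadamard_sub_hadamard_le (norm_map_le_of_abs_le hσ'b _) hY' hS hY).trans_eq ?_
    simp only [gcnGradLip, NNReal.coe_mul, NNReal.coe_add, NNReal.coe_natCast,
      show L - (L - (k + 1) + 1) = k by omega]
    ring
  · rw [hGL, hG'L, Nat.sub_self, gcnGradLip, NNReal.coe_mul, mul_assoc]
    exact (hΦl _ _).trans (by gcongr; exact hZ L le_rfl)

def gcnWeightGradLip (n d : ℕ) (ρ β : ℝ≥0) (L l : ℕ) : ℝ≥0 :=
  n * (n * (gcnActBound n d ρ β l + β * (ρ * gcnPreactLip n d ρ β l))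
      * gcnGradBound n d β (L - (l + 1))
    + n * β * gcnActBound n d ρ β l * gcnGradLip n d ρ β L (L - (l + 1)))

end GCN

theorem gcn_gradW_error_bounded_general {n d L : ℕ}
    {ρ β : ℝ} (hρ : 0 ≤ ρ) (hβ : 0 ≤ β) :
    ∃ C : ℝ, 0 ≤ C ∧
      ∀ (σ : ℝ → ℝ), (∀ x y : ℝ, |σ x - σ y| ≤ ρ * |x - y|) → σ 0 = 0 →
      ∀ (σ' : ℝ → ℝ), (∀ x : ℝ, |σ' x| ≤ β) →
        (∀ x y : ℝ, |σ' x - σ' y| ≤ ρ * |x - y|) →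
      ∀ (Φ : Matrix (Fin n) (Fin d) ℝ → Matrix (Fin n) (Fin d) ℝ),
        (∀ Z₁ Z₂, ‖Φ Z₁ - Φ Z₂‖ ≤ ρ * ‖Z₁ - Z₂‖) → (∀ Z, ‖Φ Z‖ ≤ β) →
      ∀ (A ASG : Matrix (Fin n) (Fin n) ℝ), ‖A‖ ≤ β → ‖ASG‖ ≤ β →
      ∀ (X : Matrix (Fin n) (Fin d) ℝ), ‖X‖ ≤ β →
      ∀ (W : ℕ → Matrix (Fin d) (Fin d) ℝ), (∀ l, l < L → ‖W l‖ ≤ β) →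
      ∀ (G GSG : ℕ → Matrix (Fin n) (Fin d) ℝ),
        G L = Φ (gcnZ A X W σ L) →
        GSG L = Φ (gcnZ ASG X W σ L) →
        (∀ l, 1 ≤ l → l < L →
          G l = Matrix.hadamard ((gcnZ A X W σ l).map σ')
            (Aᵀ * G (l + 1) * (W l)ᵀ)) →
        (∀ l, 1 ≤ l → l < L →
          GSG l = Matrix.hadamard ((gcnZ ASG X W σ l).map σ')
            (ASGᵀ * GSG (l + 1) * (W l)ᵀ)) →
      ∀ l, l < L →
        ‖(ASG * gcnH ASG X W σ l)ᵀ * GSG (l + 1) -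
            (A * gcnH A X W σ l)ᵀ * G (l + 1)‖ ≤ C * ‖ASG - A‖ := by
  lift ρ to ℝ≥0 using hρ
  lift β to ℝ≥0 using hβ
  refine ⟨∑ l ∈ Finset.range L, gcnWeightGradLip n d ρ β L l, by positivity, ?_⟩
  intro σ hσ hσ0 σ' hσ'b hσ'l Φ hΦl hΦb A A' hA hA' X hX W hW G G' hGL hG'L hG hG' l hl
  have hAH := norm_mul_le_of_le hA (norm_gcnH_le hσ hσ0 hA hX hW l hl.le)
  have hAH' := norm_mul_sub_mul_le hA (norm_gcnH_le hσ hσ0 hA' hX hW l hl.le)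
    (le_refl ‖A' - A‖) (norm_gcnH_sub_le hσ hσ0 hA hA' hX hW l hl.le)
  have hG'b := norm_gcnGrad_le hσ'b hA' hW (hG'L ▸ hΦb _) hG' (l := l + 1) (by omega) hl
  have hGd := norm_gcnGrad_sub_le hσ'b hσ'l hΦl hΦb hA hA' hW
    (norm_gcnZ_sub_le hσ hσ0 hA hA' hX hW) hGL hG'L hG hG' (l := l + 1) (by omega) hl
  have hAHd := (norm_transpose _).trans_le hAH'
  rw [transpose_sub] at hAHd
  calc _ ≤ _ := norm_mul_sub_mul_le ((norm_transpose _).trans_le hAH) hG'b hAHd hGd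
    _ = gcnWeightGradLip n d ρ β L l * ‖A' - A‖ := by
      simp only [gcnWeightGradLip, Fintype.card_fin, NNReal.coe_mul, NNReal.coe_add,
        NNReal.coe_natCast]
      ring
    _ ≤ (∑ l ∈ Finset.range L, (gcnWeightGradLip n d ρ β L l : ℝ)) * ‖A' - A‖ := by
      gcongr
      exact Finset.single_le_sum (fun _ _ => NNReal.coe_nonneg _) (Finset.mem_range.2 hl)

/-- Lemma 2: error bound for the weight gradients of a multi-layer GCN. There
is a constant `C`, depending only on ρ, β, n, d, L, such that the weight
gradients `(A·H^(l))ᵀ·G^(l+1)` of the SG estimator (forward and backward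
recursions with `A_SG` in place of `A`, terminal gradients `Φ(Z^(L))` resp.
`Φ(Z_SG^(L))`) satisfy
`‖(A_SG·H_SG^(l))ᵀ·G_SG^(l+1) - (A·H^(l))ᵀ·G^(l+1)‖ ≤ C * ‖A_SG - A‖`
for all `0 ≤ l ≤ L - 1`. -/
theorem gcn_gradW_error_bounded {n d L : ℕ} (hn : 0 < n) (hd : 0 < d) (hL : 0 < L)
    {ρ β : ℝ} (hρ : 0 ≤ ρ) (hβ : 0 ≤ β) :
    ∃ C : ℝ, 0 ≤ C ∧
      ∀ (σ : ℝ → ℝ), (∀ x y : ℝ, |σ x - σ y| ≤ ρ * |x - y|) → σ 0 = 0 →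
      ∀ (σ' : ℝ → ℝ), (∀ x : ℝ, |σ' x| ≤ β) →
        (∀ x y : ℝ, |σ' x - σ' y| ≤ ρ * |x - y|) →
      ∀ (Φ : Matrix (Fin n) (Fin d) ℝ → Matrix (Fin n) (Fin d) ℝ),
        (∀ Z₁ Z₂, ‖Φ Z₁ - Φ Z₂‖ ≤ ρ * ‖Z₁ - Z₂‖) → (∀ Z, ‖Φ Z‖ ≤ β) →
      ∀ (A ASG : Matrix (Fin n) (Fin n) ℝ), ‖A‖ ≤ β → ‖ASG‖ ≤ β →
      ∀ (X : Matrix (Fin n) (Fin d) ℝ), ‖X‖ ≤ β →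
      ∀ (W : ℕ → Matrix (Fin d) (Fin d) ℝ), (∀ l, l < L → ‖W l‖ ≤ β) →
      ∀ (G GSG : ℕ → Matrix (Fin n) (Fin d) ℝ),
        G L = Φ (gcnZ A X W σ L) →
        GSG L = Φ (gcnZ ASG X W σ L) →
        (∀ l, 1 ≤ l → l < L →
          G l = Matrix.hadamard ((gcnZ A X W σ l).map σ')
            (Aᵀ * G (l + 1) * (W l)ᵀ)) →
        (∀ l, 1 ≤ l → l < L →
          GSG l = Matrix.hadamard ((gcnZ ASG X W σ l).map σ')
            (ASGᵀ * GSG (l + 1) * (W l)ᵀ)) →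
      ∀ l, l < L →
        ‖(ASG * gcnH ASG X W σ l)ᵀ * GSG (l + 1) -
            (A * gcnH A X W σ l)ᵀ * G (l + 1)‖ ≤ C * ‖ASG - A‖ :=
  gcn_gradW_error_bounded_general hρ hβ
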